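/- arXiv:2103.01687 — 2 statements merged into one kernel-verified Lean document; each statement's English description precedes it below -/
import Mathlib

section
/- Let V be a 2g-dimensional vector space over 𝔽₂ equipped with a nondegenerate alternating bilinear form B. The number of quadratic refinements q : V → 𝔽₂ of B (i.e. functions with q(x+y) = q(x) + q(y) + B(x,y)) whose Arf invariant is 0 (even theta-characteristics) equals 2^{g-1}(2^g + 1), and the number with Arf invariant 1 (odd theta-characteristics) equals 2^{g-1}(2^g - 1). -/
/-!
Let `q₀ x = ∑ᵢ x₂ᵢ x₂ᵢ₊₁`. Two refinements of `B` differ by an additive functional, and since `B`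
is nondegenerate every functional is `B(·, c)` for a unique `c`. Hence the refinements are exactly
the forms `q₀ + B(·, c) = q₀(· + c) + q₀(c)`, one for each `c`; the second expression shows that
such a form has as many zeros as `q₀` has points of value `q₀(c)`, so its Arf invariant is `q₀(c)`.
Both counts thus reduce to the sizes of the level sets of `q₀`, which follow from their sum `2^{2g}`
and the character sum `∑ₓ (-1)^{q₀ x} = ∏ᵢ ∑_{a,b} (-1)^{ab} = 2^g`.
-/

/-- The standard nondegenerate alternating bilinear form on `𝔽₂^{2g}`. -/
def stdSymplecticForm (g : ℕ) (x y : Fin (2 * g) → ZMod 2) : ZMod 2 :=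
  ∑ i : Fin g,
    (x ⟨2 * i.val, by have := i.isLt; omega⟩ * y ⟨2 * i.val + 1, by have := i.isLt; omega⟩ +
      x ⟨2 * i.val + 1, by have := i.isLt; omega⟩ * y ⟨2 * i.val, by have := i.isLt; omega⟩)

/-- A quadratic refinement of the standard symplectic form. -/
def IsQuadRefinement (g : ℕ) (q : (Fin (2 * g) → ZMod 2) → ZMod 2) : Prop :=
  ∀ x y, q (x + y) = q x + q y + stdSymplecticForm g x y

/-- The Arf invariant of a quadratic refinement: it is `0` exactly when `q` takes the
value `0` the majority number `2^{2g-1} + 2^{g-1}` of times. -/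
noncomputable def arf (g : ℕ) (q : (Fin (2 * g) → ZMod 2) → ZMod 2) : ZMod 2 :=
  if Nat.card {x : Fin (2 * g) → ZMod 2 // q x = 0} = 2 ^ (2 * g - 1) + 2 ^ (g - 1) then 0 else 1

open Finset

namespace ThetaCharacteristic

def pairIndex (g : ℕ) : Fin g × Fin 2 ≃ Fin (2 * g) :=
  finProdFinEquiv.trans (finCongr (Nat.mul_comm g 2))

@[simp]
lemma pairIndex_val (g : ℕ) (p : Fin g × Fin 2) : (pairIndex g p : ℕ) = 2 * p.1 + p.2 := by
  simp [pairIndex, add_comm, mul_comm]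

lemma sum_fin_two_mul {M : Type*} [AddCommMonoid M] (g : ℕ) (f : Fin (2 * g) → M) :
    ∑ k, f k = ∑ i : Fin g, (f ⟨2 * i, by omega⟩ + f ⟨2 * i + 1, by omega⟩) := by
  rw [← (pairIndex g).sum_comp, Fintype.sum_prod_type]
  refine sum_congr rfl fun i _ => ?_
  rw [Fin.sum_univ_two]
  congr 2 <;> ext <;> simp

def pairCoords (g : ℕ) {R : Type*} : (Fin (2 * g) → R) ≃ (Fin g → R × R) :=
  ((pairIndex g).symm.arrowCongr (Equiv.refl R)).trans <|
    (Equiv.curry _ _ _).trans (Equiv.piCongrRight fun _ => piFinTwoEquiv fun _ => R)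

lemma pairCoords_apply (g : ℕ) {R : Type*} (x : Fin (2 * g) → R) (i : Fin g) :
    pairCoords g x i = (x ⟨2 * i, by omega⟩, x ⟨2 * i + 1, by omega⟩) :=
  Prod.ext (congrArg x (Fin.ext (by simp))) (congrArg x (Fin.ext (by simp)))

def coordSwap (g : ℕ) (k : Fin (2 * g)) : Fin (2 * g) :=
  ⟨if k.val % 2 = 0 then k + 1 else k - 1, by split <;> omega⟩

lemma coordSwap_involutive (g : ℕ) : Function.Involutive (coordSwap g) := fun k =>
  Fin.ext (by simp only [coordSwap]; split <;> split <;> omega)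

lemma coordSwap_two_mul (g : ℕ) (i : Fin g) :
    coordSwap g ⟨2 * i, by omega⟩ = ⟨2 * i + 1, by omega⟩ := by
  simp [coordSwap]

lemma coordSwap_two_mul_add_one (g : ℕ) (i : Fin g) :
    coordSwap g ⟨2 * i + 1, by omega⟩ = ⟨2 * i, by omega⟩ := by
  simp [coordSwap]

lemma stdSymplecticForm_eq_sum (g : ℕ) (x y : Fin (2 * g) → ZMod 2) :
    stdSymplecticForm g x y = ∑ k, x k * y (coordSwap g k) := by
  rw [sum_fin_two_mul, stdSymplecticForm]
  simp only [coordSwap_two_mul, coordSwap_two_mul_add_one]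

lemma stdSymplecticForm_add_left (g : ℕ) (x y z : Fin (2 * g) → ZMod 2) :
    stdSymplecticForm g (x + y) z = stdSymplecticForm g x z + stdSymplecticForm g y z := by
  simp only [stdSymplecticForm_eq_sum, Pi.add_apply, add_mul, sum_add_distrib]

lemma stdSymplecticForm_single_left (g : ℕ) (k : Fin (2 * g)) (y : Fin (2 * g) → ZMod 2) :
    stdSymplecticForm g (Pi.single k 1) y = y (coordSwap g k) := by
  simp [stdSymplecticForm_eq_sum, Pi.single_apply]

lemma injective_swap_stdSymplecticForm (g : ℕ) :
    Function.Injective (Function.swap (stdSymplecticForm g)) := fun c c' h => by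
  funext k
  have := congrFun h (Pi.single (coordSwap g k) 1)
  simpa only [Function.swap, stdSymplecticForm_single_left, coordSwap_involutive g k] using this

lemma exists_eq_stdSymplecticForm (g : ℕ) (ℓ : (Fin (2 * g) → ZMod 2) →+ ZMod 2) :
    ∃ c, ∀ x, ℓ x = stdSymplecticForm g x c := by
  refine ⟨fun k => ℓ (Pi.single (coordSwap g k) 1), fun x => ?_⟩
  calc ℓ x = ∑ k, x k • ℓ fun j => if k = j then 1 else 0 :=
        (ℓ.toZModLinearMap 2).pi_apply_eq_sum_univ x
    _ = _ := by
      rw [stdSymplecticForm_eq_sum]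
      refine sum_congr rfl fun k _ => ?_
      rw [coordSwap_involutive g k, smul_eq_mul]
      congr 2
      funext j
      simp [Pi.single_apply, eq_comm]

def stdQuadForm (g : ℕ) (x : Fin (2 * g) → ZMod 2) : ZMod 2 :=
  ∑ i : Fin g, x ⟨2 * i, by omega⟩ * x ⟨2 * i + 1, by omega⟩

lemma isQuadRefinement_stdQuadForm (g : ℕ) : IsQuadRefinement g (stdQuadForm g) := by
  intro x y
  simp only [stdQuadForm, stdSymplecticForm, Pi.add_apply, ← sum_add_distrib]
  exact sum_congr rfl fun i _ => by ring

def twistedQuadForm (g : ℕ) (c x : Fin (2 * g) → ZMod 2) : ZMod 2 :=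
  stdQuadForm g x + stdSymplecticForm g x c

lemma isQuadRefinement_twistedQuadForm (g : ℕ) (c : Fin (2 * g) → ZMod 2) :
    IsQuadRefinement g (twistedQuadForm g c) := by
  intro x y
  simp only [twistedQuadForm, isQuadRefinement_stdQuadForm g x y, stdSymplecticForm_add_left]
  ring

lemma twistedQuadForm_injective (g : ℕ) : Function.Injective (twistedQuadForm g) := fun c c' h =>
  injective_swap_stdSymplecticForm g <| funext fun x => by
    simpa [twistedQuadForm] using congrFun h x

lemma IsQuadRefinement.exists_twistedQuadForm_eq {g : ℕ} {q : (Fin (2 * g) → ZMod 2) → ZMod 2}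
    (hq : IsQuadRefinement g q) : ∃ c, twistedQuadForm g c = q := by
  let ℓ : (Fin (2 * g) → ZMod 2) →+ ZMod 2 :=
    AddMonoidHom.mk' (fun x => q x + stdQuadForm g x) fun x y => by
      rw [hq, isQuadRefinement_stdQuadForm]
      grind
  obtain ⟨c, hc⟩ := exists_eq_stdSymplecticForm g ℓ
  refine ⟨c, funext fun x => ?_⟩
  have hx : q x + stdQuadForm g x = stdSymplecticForm g x c := hc x
  rw [twistedQuadForm, ← hx]
  grind

lemma twistedQuadForm_eq (g : ℕ) (c x : Fin (2 * g) → ZMod 2) :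
    twistedQuadForm g c x = stdQuadForm g (x + c) + stdQuadForm g c := by
  rw [twistedQuadForm, isQuadRefinement_stdQuadForm]
  grind

lemma card_twistedQuadForm_eq_zero (g : ℕ) (c : Fin (2 * g) → ZMod 2) :
    Nat.card {x // twistedQuadForm g c x = 0} =
      Nat.card {y // stdQuadForm g y = stdQuadForm g c} :=
  Nat.card_congr <| (Equiv.addRight c).subtypeEquiv fun x => by
    rw [twistedQuadForm_eq, Equiv.coe_addRight]
    grind

def signChar : AddChar (ZMod 2) ℤ := AddChar.zmodChar 2 (by norm_num : (-1 : ℤ) ^ 2 = 1)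

lemma signChar_sum {ι : Type*} (s : Finset ι) (f : ι → ZMod 2) :
    signChar (∑ i ∈ s, f i) = ∏ i ∈ s, signChar (f i) :=
  map_prod signChar.toMonoidHom (fun i => Multiplicative.ofAdd (f i)) s

lemma signChar_eq_ite (v : ZMod 2) :
    signChar v = (if v = 0 then 1 else 0) - (if v = 1 then 1 else 0) := by
  fin_cases v <;> rfl

lemma card_eq_zero_sub_card_eq_one {α : Type*} [Fintype α] (f : α → ZMod 2) :
    (Nat.card {a // f a = 0} : ℤ) - Nat.card {a // f a = 1} = ∑ a, signChar (f a) := by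
  classical
  simp [signChar_eq_ite, sum_sub_distrib, sum_boole, Nat.card_eq_fintype_card,
    Fintype.card_subtype]

lemma card_eq_zero_add_card_eq_one {α : Type*} [Fintype α] (f : α → ZMod 2) :
    Nat.card {a // f a = 0} + Nat.card {a // f a = 1} = Nat.card α := by
  classical
  have : ∀ v : ZMod 2, v = 1 ↔ ¬v = 0 := by decide
  simp only [this, Nat.card_eq_fintype_card, Fintype.card_subtype, card_filter_add_card_filter_not,
    card_univ]

lemma sum_signChar_sum_mul (ι : Type*) [Fintype ι] [DecidableEq ι] :
    ∑ h : ι → ZMod 2 × ZMod 2, signChar (∑ i, (h i).1 * (h i).2) = 2 ^ Fintype.card ι := by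
  have hpair : ∑ p : ZMod 2 × ZMod 2, signChar (p.1 * p.2) = 2 := by decide
  simp only [signChar_sum, ← Fintype.prod_sum fun _ (p : ZMod 2 × ZMod 2) => signChar (p.1 * p.2),
    hpair, prod_const, card_univ]

lemma stdQuadForm_eq_sum_pairCoords (g : ℕ) (x : Fin (2 * g) → ZMod 2) :
    stdQuadForm g x = ∑ i, (pairCoords g x i).1 * (pairCoords g x i).2 := by
  simp only [stdQuadForm, pairCoords_apply]

lemma sum_signChar_stdQuadForm (g : ℕ) : ∑ x, signChar (stdQuadForm g x) = 2 ^ g := by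
  simp only [stdQuadForm_eq_sum_pairCoords]
  rw [(pairCoords g).sum_comp fun h => signChar (∑ i, (h i).1 * (h i).2), sum_signChar_sum_mul,
    Fintype.card_fin]

lemma card_stdQuadForm_eq {g : ℕ} (hg : 1 ≤ g) :
    Nat.card {x // stdQuadForm g x = 0} = 2 ^ (g - 1) * (2 ^ g + 1) ∧
      Nat.card {x // stdQuadForm g x = 1} = 2 ^ (g - 1) * (2 ^ g - 1) := by
  have hadd := card_eq_zero_add_card_eq_one (stdQuadForm g)
  have hsub := card_eq_zero_sub_card_eq_one (stdQuadForm g)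
  rw [sum_signChar_stdQuadForm] at hsub
  rw [Nat.card_fun, Nat.card_zmod, Nat.card_eq_fintype_card (α := Fin _), Fintype.card_fin] at hadd
  obtain ⟨n, rfl⟩ : ∃ n, g = n + 1 := ⟨g - 1, by omega⟩
  have hpos : 1 ≤ 2 ^ n * 2 := by have := Nat.one_le_two_pow (n := n); omega
  rw [show 2 ^ (2 * (n + 1)) = 2 ^ n * 2 * (2 ^ n * 2) by ring] at hadd
  simp only [Nat.add_sub_cancel, pow_succ] at hsub ⊢
  qify [hpos] at hadd hsub ⊢
  constructor
  · linear_combination (hadd + hsub) / 2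
  · linear_combination (hadd - hsub) / 2

lemma arf_twistedQuadForm {g : ℕ} (hg : 1 ≤ g) (c : Fin (2 * g) → ZMod 2) :
    arf g (twistedQuadForm g c) = stdQuadForm g c := by
  obtain ⟨h0, h1⟩ := card_stdQuadForm_eq hg
  have hpos : 0 < 2 ^ (g - 1) := Nat.two_pow_pos _
  have hmajority : 2 ^ (2 * g - 1) + 2 ^ (g - 1) = 2 ^ (g - 1) * (2 ^ g + 1) := by
    rw [mul_add, ← pow_add, mul_one]
    congr 2
    omega
  rw [arf, card_twistedQuadForm_eq_zero, hmajority]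
  rcases (by decide : ∀ v : ZMod 2, v = 0 ∨ v = 1) (stdQuadForm g c) with hc | hc <;> rw [hc]
  · rw [h0, if_pos rfl]
  · rw [h1, if_neg]
    exact ((Nat.mul_lt_mul_left hpos).2 ((Nat.sub_le _ _).trans_lt (Nat.lt_succ_self _))).ne

lemma card_isQuadRefinement_arf_eq {g : ℕ} (hg : 1 ≤ g) (v : ZMod 2) :
    Nat.card {q // IsQuadRefinement g q ∧ arf g q = v} = Nat.card {c // stdQuadForm g c = v} := by
  let e : (Fin (2 * g) → ZMod 2) ≃ {q // IsQuadRefinement g q} :=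
    Equiv.ofBijective (fun c => ⟨twistedQuadForm g c, isQuadRefinement_twistedQuadForm g c⟩)
      ⟨fun c c' h => twistedQuadForm_injective g (congrArg Subtype.val h),
        fun q => (IsQuadRefinement.exists_twistedQuadForm_eq q.2).imp fun c hc => Subtype.ext hc⟩
  refine Nat.card_congr ((e.subtypeEquiv fun c => ?_).trans
    (Equiv.subtypeSubtypeEquivSubtypeInter _ _)).symm
  show _ ↔ arf g (twistedQuadForm g c) = v
  rw [arf_twistedQuadForm hg]

end ThetaCharacteristic

open ThetaCharacteristic

theorem count_even_odd_theta_characteristics (g : ℕ) (hg : 1 ≤ g) :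
    Nat.card {q : (Fin (2 * g) → ZMod 2) → ZMod 2 //
        IsQuadRefinement g q ∧ arf g q = 0} = 2 ^ (g - 1) * (2 ^ g + 1) ∧
    Nat.card {q : (Fin (2 * g) → ZMod 2) → ZMod 2 //
        IsQuadRefinement g q ∧ arf g q = 1} = 2 ^ (g - 1) * (2 ^ g - 1) := by
  simpa only [card_isQuadRefinement_arf_eq hg] using card_stdQuadForm_eq hg
end

section
/- Let V = 𝔽₂^{2g} with nondegenerate alternating form B, and fix a nonzero vector v ∈ V. The number of quadratic refinements q of B with Arf invariant 1 such that the quadratic refinement q' defined by q'(x) = q(x) + B(v,x) also has Arf invariant 1 equals 2^{g-1}(2^{g-1} - 1). -/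
local notation "𝕍" g:max => Fin (2 * g) → ZMod 2

lemma ZMod.eq_zero_or_one_mod_two (a : ZMod 2) : a = 0 ∨ a = 1 := by
  revert a; decide

def signChar : AddChar (ZMod 2) ℤ where
  toFun a := if a = 0 then 1 else -1
  map_zero_eq_one' := rfl
  map_add_eq_mul' := by decide

lemma signChar_one : signChar 1 = -1 := rfl

lemma AddChar.map_finset_sum {ι A M : Type*} [AddCommMonoid A] [CommMonoid M]
    (ψ : AddChar A M) (s : Finset ι) (f : ι → A) :
    ψ (∑ i ∈ s, f i) = ∏ i ∈ s, ψ (f i) :=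
  map_prod ψ.toMonoidHom (fun i => Multiplicative.ofAdd (f i)) s

lemma two_mul_card_eq_zero {α : Type*} [Fintype α] (F : α → ZMod 2) :
    2 * (Nat.card {x // F x = 0} : ℤ) = Fintype.card α + ∑ x, signChar (F x) := by
  classical
  have hsign : ∀ a : ZMod 2, signChar a = 2 * (if a = 0 then 1 else 0) - 1 := by decide
  simp only [hsign, Finset.sum_sub_distrib, ← Finset.mul_sum, Finset.sum_boole,
    Nat.card_eq_fintype_card, Fintype.card_subtype]
  simp

def pairIndex (g : ℕ) : Fin g × Fin 2 ≃ Fin (2 * g) :=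
  finProdFinEquiv.trans (finCongr (Nat.mul_comm g 2))

lemma pairIndex_zero {g : ℕ} (i : Fin g) :
    pairIndex g (i, 0) = ⟨2 * i.val, by have := i.isLt; omega⟩ :=
  Fin.ext (by simp [pairIndex])

lemma pairIndex_one {g : ℕ} (i : Fin g) :
    pairIndex g (i, 1) = ⟨2 * i.val + 1, by have := i.isLt; omega⟩ :=
  Fin.ext (by simp [pairIndex]; ring)

/-- The involution `2i ↔ 2i + 1` exchanging the two coordinates of each hyperbolic pair. -/
def partner (g : ℕ) : Equiv.Perm (Fin (2 * g)) :=
  (pairIndex g).permCongr ((Equiv.refl (Fin g)).prodCongr (Equiv.swap 0 1))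

lemma partner_pairIndex {g : ℕ} (i : Fin g) (k : Fin 2) :
    partner g (pairIndex g (i, k)) = pairIndex g (i, Equiv.swap 0 1 k) := by
  simp [partner, Equiv.permCongr_apply]

lemma partner_involutive (g : ℕ) : Function.Involutive (partner g) := by
  intro j
  obtain ⟨⟨i, k⟩, rfl⟩ := (pairIndex g).surjective j
  simp [partner_pairIndex]

lemma stdSymplecticForm_eq_sum_pairIndex {g : ℕ} (x y : 𝕍 g) :
    stdSymplecticForm g x y = ∑ i : Fin g,
      (x (pairIndex g (i, 0)) * y (pairIndex g (i, 1)) +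
        x (pairIndex g (i, 1)) * y (pairIndex g (i, 0))) := by
  simp only [pairIndex_zero, pairIndex_one]
  rfl

lemma stdSymplecticForm_eq_dotProduct {g : ℕ} (x y : 𝕍 g) :
    stdSymplecticForm g x y = x ⬝ᵥ (y ∘ partner g) := by
  rw [stdSymplecticForm_eq_sum_pairIndex, dotProduct, ← (pairIndex g).sum_comp,
    Fintype.sum_prod_type]
  simp [Fin.sum_univ_two, partner_pairIndex]

lemma stdSymplecticForm_add_left {g : ℕ} (x y z : 𝕍 g) :
    stdSymplecticForm g (x + y) z = stdSymplecticForm g x z + stdSymplecticForm g y z := by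
  simp only [stdSymplecticForm_eq_dotProduct, add_dotProduct]

lemma stdSymplecticForm_add_right {g : ℕ} (x y z : 𝕍 g) :
    stdSymplecticForm g x (y + z) = stdSymplecticForm g x y + stdSymplecticForm g x z := by
  simp only [stdSymplecticForm_eq_dotProduct, Pi.add_comp, dotProduct_add]

lemma stdSymplecticForm_single_left {g : ℕ} (j : Fin (2 * g)) (y : 𝕍 g) :
    stdSymplecticForm g (Pi.single j 1) y = y (partner g j) := by
  simp [stdSymplecticForm_eq_dotProduct]

lemma stdSymplecticForm_single_right {g : ℕ} (x : 𝕍 g) (j : Fin (2 * g)) :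
    stdSymplecticForm g x (Pi.single j 1) = x (partner g j) := by
  have : (Pi.single j 1 : 𝕍 g) ∘ partner g = Pi.single (partner g j) 1 := by
    ext k
    simp only [Function.comp_apply, Pi.single_apply, (partner_involutive g).eq_iff]
  rw [stdSymplecticForm_eq_dotProduct, this, dotProduct_single_one]

lemma stdSymplecticForm_left_injective (g : ℕ) : Function.Injective (stdSymplecticForm g) := by
  intro x y h
  funext j
  simpa [stdSymplecticForm_single_right, partner_involutive g j] using
    congrFun h (Pi.single (partner g j) 1)

lemma exists_stdSymplecticForm_eq_one {g : ℕ} {v : 𝕍 g} (hv : v ≠ 0) :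
    ∃ u, stdSymplecticForm g u v = 1 := by
  obtain ⟨j, hj⟩ := Function.ne_iff.mp hv
  refine ⟨Pi.single (partner g j) 1, ?_⟩
  rw [stdSymplecticForm_single_left, partner_involutive g j]
  exact (ZMod.eq_zero_or_one_mod_two (v j)).resolve_left hj

lemma sum_signChar_stdSymplecticForm {g : ℕ} {v : 𝕍 g} (hv : v ≠ 0) :
    ∑ w : 𝕍 g, signChar (stdSymplecticForm g w v) = 0 := by
  let ψ : AddChar (𝕍 g) ℤ := signChar.compAddMonoidHom
    (AddMonoidHom.mk' (stdSymplecticForm g · v) (stdSymplecticForm_add_left · · v))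
  obtain ⟨u, hu⟩ := exists_stdSymplecticForm_eq_one hv
  have hψ : ψ ≠ 1 := AddChar.ne_one_iff.mpr ⟨u, by simp [ψ, hu, signChar_one]⟩
  exact AddChar.sum_eq_zero_of_ne_one hψ

lemma exists_addMonoidHom_eq_stdSymplecticForm {g : ℕ} (f : 𝕍 g →+ ZMod 2) :
    ∃ w, ∀ x, f x = stdSymplecticForm g w x := by
  refine ⟨fun j => f (Pi.single (partner g j) 1), fun x => ?_⟩
  let B : 𝕍 g →+ ZMod 2 := AddMonoidHom.mk' _ (stdSymplecticForm_add_right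
    (fun j => f (Pi.single (partner g j) 1)))
  suffices f = B from DFunLike.congr_fun this x
  refine AddMonoidHom.functions_ext _ _ _ fun j a => ?_
  obtain rfl | rfl := ZMod.eq_zero_or_one_mod_two a
  · simp
  · simp [B, stdSymplecticForm_single_right, partner_involutive g j]

def stdQuadForm (g : ℕ) (x : 𝕍 g) : ZMod 2 :=
  ∑ i : Fin g, x (pairIndex g (i, 0)) * x (pairIndex g (i, 1))

lemma isQuadRefinement_stdQuadForm (g : ℕ) : IsQuadRefinement g (stdQuadForm g) := by
  intro x y
  simp only [stdQuadForm, stdSymplecticForm_eq_sum_pairIndex, Pi.add_apply,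
    ← Finset.sum_add_distrib]
  exact Finset.sum_congr rfl fun i _ => by ring

lemma sum_signChar_stdQuadForm (g : ℕ) : ∑ x : 𝕍 g, signChar (stdQuadForm g x) = 2 ^ g := by
  classical
  let e : (Fin g → Fin 2 → ZMod 2) ≃ 𝕍 g :=
    (Equiv.curry _ _ _).symm.trans ((pairIndex g).arrowCongr (Equiv.refl _))
  have hsum : ∑ p : Fin 2 → ZMod 2, signChar (p 0 * p 1) = 2 := by decide
  rw [← e.sum_comp]
  simp only [e, stdQuadForm, AddChar.map_finset_sum, Equiv.trans_apply, Equiv.arrowCongr_apply,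
    Equiv.coe_refl, Function.comp_apply, id, Equiv.symm_apply_apply, Equiv.curry_symm_apply,
    Function.uncurry_apply_pair]
  rw [← Fintype.prod_sum (fun (_ : Fin g) (p : Fin 2 → ZMod 2) => signChar (p 0 * p 1))]
  simp [hsum]

section refinement

variable {g : ℕ} {q : 𝕍 g → ZMod 2}

lemma IsQuadRefinement.add_stdSymplecticForm (hq : IsQuadRefinement g q) (w : 𝕍 g) :
    IsQuadRefinement g (fun x => q x + stdSymplecticForm g w x) := by
  intro x y
  dsimp only
  rw [hq, stdSymplecticForm_add_right]
  ring

lemma IsQuadRefinement.exists_eq_add_stdSymplecticForm (hq : IsQuadRefinement g q)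
    {q' : 𝕍 g → ZMod 2} (hq' : IsQuadRefinement g q') :
    ∃ w, q' = fun x => q x + stdSymplecticForm g w x := by
  let f : 𝕍 g →+ ZMod 2 := AddMonoidHom.mk' (fun x => q' x - q x) fun x y => by
    rw [hq, hq']
    ring
  obtain ⟨w, hw⟩ := exists_addMonoidHom_eq_stdSymplecticForm f
  exact ⟨w, funext fun x => by rw [← hw x]; simp [f]⟩

lemma IsQuadRefinement.add_stdSymplecticForm_eq (hq : IsQuadRefinement g q) (w x : 𝕍 g) :
    q x + stdSymplecticForm g w x = q (w + x) + q w := by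
  rw [hq]
  linear_combination (-q w) * (CharTwo.two_eq_zero : (2 : ZMod 2) = 0)

lemma IsQuadRefinement.sum_signChar_add_stdSymplecticForm (hq : IsQuadRefinement g q)
    (w : 𝕍 g) : ∑ x, signChar (q x + stdSymplecticForm g w x) =
      signChar (q w) * ∑ x, signChar (q x) := by
  simp only [hq.add_stdSymplecticForm_eq, AddChar.map_add_eq_mul, mul_comm _ (signChar (q w)),
    ← Finset.mul_sum]
  exact congrArg _ (Fintype.sum_equiv (Equiv.addLeft w) _ _ fun _ => rfl)

end refinement

lemma arf_eq_of_sum_signChar {g : ℕ} (hg : 1 ≤ g) {q : 𝕍 g → ZMod 2} {a : ZMod 2}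
    (h : ∑ x, signChar (q x) = signChar a * 2 ^ g) : arf g q = a := by
  obtain ⟨n, rfl⟩ := Nat.exists_eq_add_of_le' hg
  have hcard := two_mul_card_eq_zero q
  rw [h, Fintype.card_fun, ZMod.card, Fintype.card_fin] at hcard
  push_cast at hcard
  have hn : 2 * (n + 1) - 1 = 2 * n + 1 := by omega
  simp only [arf, hn, Nat.add_sub_cancel]
  obtain rfl | rfl := ZMod.eq_zero_or_one_mod_two a
  · rw [if_pos]
    have : (Nat.card {x // q x = 0} : ℤ) = 2 ^ (2 * n + 1) + 2 ^ n := by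
      rw [signChar.map_zero_eq_one] at hcard
      ring_nf at hcard ⊢
      linarith
    exact_mod_cast this
  · rw [if_neg]
    intro hzero
    rw [hzero, signChar_one] at hcard
    push_cast at hcard
    ring_nf at hcard
    have : (0 : ℤ) < 2 ^ n := by positivity
    linarith

lemma IsQuadRefinement.four_mul_card_eq_one_and_add_eq_one {g : ℕ} {q : 𝕍 g → ZMod 2}
    (hq : IsQuadRefinement g q) {v : 𝕍 g} (hv : v ≠ 0) :
    4 * (Nat.card {w // q w = 1 ∧ q (w + v) = 1} : ℤ) =
      2 ^ (2 * g) - 2 * ∑ x, signChar (q x) := by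
  classical
  have hindicator : ∀ a b : ZMod 2,
      (if a = 1 ∧ b = 1 then 4 else 0 : ℤ) = (1 - signChar a) * (1 - signChar b) := by
    decide
  have hcross : ∀ w, signChar (q w) * signChar (q (w + v)) =
      signChar (q v) * signChar (stdSymplecticForm g w v) := by
    intro w
    rw [← AddChar.map_add_eq_mul, ← AddChar.map_add_eq_mul, hq]
    congr 1
    linear_combination (q w) * (CharTwo.two_eq_zero : (2 : ZMod 2) = 0)
  have hshift : ∑ w, signChar (q (w + v)) = ∑ w, signChar (q w) :=
    Fintype.sum_equiv (Equiv.addRight v) _ _ fun _ => rfl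
  calc 4 * (Nat.card {w // q w = 1 ∧ q (w + v) = 1} : ℤ)
      = ∑ w, if q w = 1 ∧ q (w + v) = 1 then 4 else 0 := by
        simp [Finset.sum_ite, Nat.card_eq_fintype_card, Fintype.card_subtype, mul_comm]
    _ = ∑ w, (1 - signChar (q w) - signChar (q (w + v)) +
          signChar (q v) * signChar (stdSymplecticForm g w v)) := by
        refine Finset.sum_congr rfl fun w _ => ?_
        rw [hindicator, ← hcross]
        ring
    _ = 2 ^ (2 * g) - 2 * ∑ x, signChar (q x) := by
        simp [Finset.sum_add_distrib, Finset.sum_sub_distrib, ← Finset.mul_sum, hshift,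
          sum_signChar_stdSymplecticForm hv]
        ring

noncomputable def refinementEquiv (g : ℕ) : 𝕍 g ≃ {q // IsQuadRefinement g q} :=
  Equiv.ofBijective
    (fun w => ⟨fun x => stdQuadForm g x + stdSymplecticForm g w x,
      (isQuadRefinement_stdQuadForm g).add_stdSymplecticForm w⟩)
    ⟨fun w w' h => stdSymplecticForm_left_injective g <| funext fun x =>
        add_left_cancel (congrFun (congrArg Subtype.val h) x),
      fun ⟨q, hq⟩ => by
        obtain ⟨w, rfl⟩ := (isQuadRefinement_stdQuadForm g).exists_eq_add_stdSymplecticForm hq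
        exact ⟨w, rfl⟩⟩

lemma coe_refinementEquiv {g : ℕ} (w : 𝕍 g) :
    (refinementEquiv g w : 𝕍 g → ZMod 2) = fun x => stdQuadForm g x + stdSymplecticForm g w x :=
  rfl

lemma arf_refinementEquiv {g : ℕ} (hg : 1 ≤ g) (w : 𝕍 g) :
    arf g (refinementEquiv g w).val = stdQuadForm g w :=
  arf_eq_of_sum_signChar hg <| by
    rw [coe_refinementEquiv, (isQuadRefinement_stdQuadForm g).sum_signChar_add_stdSymplecticForm,
      sum_signChar_stdQuadForm]

lemma refinementEquiv_add_stdSymplecticForm {g : ℕ} (w v : 𝕍 g) :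
    (fun x => (refinementEquiv g w).val x + stdSymplecticForm g v x) =
      (refinementEquiv g (w + v)).val := by
  funext x
  simp only [coe_refinementEquiv, stdSymplecticForm_add_left, add_assoc]

theorem count_odd_theta_characteristics_staying_odd (g : ℕ) (hg : 1 ≤ g)
    (v : Fin (2 * g) → ZMod 2) (hv : v ≠ 0) :
    Nat.card {q : (Fin (2 * g) → ZMod 2) → ZMod 2 //
        IsQuadRefinement g q ∧ arf g q = 1 ∧
          arf g (fun x => q x + stdSymplecticForm g v x) = 1} =
      2 ^ (g - 1) * (2 ^ (g - 1) - 1) := by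
  let e : {w // stdQuadForm g w = 1 ∧ stdQuadForm g (w + v) = 1} ≃ {q // IsQuadRefinement g q ∧
      arf g q = 1 ∧ arf g (fun x => q x + stdSymplecticForm g v x) = 1} :=
    ((refinementEquiv g).subtypeEquiv fun w => by
      rw [refinementEquiv_add_stdSymplecticForm, arf_refinementEquiv hg,
        arf_refinementEquiv hg]).trans (Equiv.subtypeSubtypeEquivSubtypeInter _ _)
  have hcount := (isQuadRefinement_stdQuadForm g).four_mul_card_eq_one_and_add_eq_one hv
  rw [sum_signChar_stdQuadForm] at hcount
  rw [← Nat.card_congr e]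
  obtain ⟨n, rfl⟩ := Nat.exists_eq_add_of_le' hg
  rw [Nat.add_sub_cancel]
  zify [Nat.one_le_two_pow]
  refine mul_left_cancel₀ four_ne_zero (hcount.trans ?_)
  ring
end
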